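/- arXiv:2412.18823 — 4 statements merged into one kernel-verified Lean document; each statement's English description precedes it below -/
import Mathlib

section
/- Let A = {t₀ + Σ_{t∈S} t : S ⊆ T} for T = {t₁,...,t_m} ⊆ ℤ_p, and suppose B = {2t₀ + Σ γ_i t_i : γ_i ∈ {0,1,2}} is a proper GAP. If n = 2t₀ + Σ γ_i t_i with γ_i ∈ {0,1,2}, then the number of pairs (a,b) ∈ A × A with a + b = n equals 2^{|{i : γ_i = 1}|}. -/
/-!
Write `f S = t₀ + ∑_{i ∈ S} tᵢ`. For subsets `S, S'`, the sum `f S + f S'` is the element of `B`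
with coefficient vector `1_S + 1_{S'} ∈ {0,1,2}^m`, so properness of `B` makes `f` injective and
turns `f S + f S' = n` into the coordinatewise condition `1_S + 1_{S'} = γ`. A solution `(S, S')`
is determined by `S`, which ranges over the interval `[{γ = 2}, {γ ≠ 0}]` of the subset lattice,
of cardinality `2 ^ #{γ = 1}`.
-/

open Finset

lemma card_filter_image_prod_image {α M : Type*} [DecidableEq M] [Add M] {f : α → M}
    (hf : Function.Injective f) (s : Finset α) (n : M) :
    #((s.image f ×ˢ s.image f).filter fun ab => ab.1 + ab.2 = n) =
      #((s ×ˢ s).filter fun xy => f xy.1 + f xy.2 = n) := by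
  classical
  rw [← prodMap_image_product, filter_image, card_image_of_injective _ (hf.prodMap hf)]
  rfl

section PairProfile

variable {ι : Type*} [Fintype ι] [DecidableEq ι]

def pairProfile (S S' : Finset ι) (i : ι) : Fin 3 :=
  (if i ∈ S then 1 else 0) + (if i ∈ S' then 1 else 0)

omit [Fintype ι] in
lemma val_pairProfile (S S' : Finset ι) (i : ι) :
    (pairProfile S S' i : ℕ) = (if i ∈ S then 1 else 0) + (if i ∈ S' then 1 else 0) := by
  unfold pairProfile
  split_ifs <;> rfl

lemma filter_pairProfile_eq_image_Icc (γ : ι → Fin 3) :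
    (univ ×ˢ univ).filter (fun SS : Finset ι × Finset ι => pairProfile SS.1 SS.2 = γ) =
      (Icc (univ.filter (γ · = 2)) (univ.filter (γ · ≠ 0))).image
        fun S => (S, univ.filter (γ · = 2) ∪ (univ.filter (γ · ≠ 0) \ S)) := by
  ext ⟨S, S'⟩
  simp only [mem_filter, mem_product, mem_univ, true_and, mem_image, mem_Icc, Prod.mk.injEq,
    @and_comm (_ = S), exists_eq_right_right]
  simp only [subset_iff, Finset.ext_iff, funext_iff, Fin.ext_iff, val_pairProfile, mem_filter,
    mem_univ, true_and, mem_union, mem_sdiff, ← forall_and]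
  refine forall_congr' fun i => ?_
  grind

lemma card_filter_pairProfile_eq_image_Icc (γ : ι → Fin 3) :
    #((univ ×ˢ univ).filter (fun SS : Finset ι × Finset ι => pairProfile SS.1 SS.2 = γ)) =
      2 ^ #{i | γ i = 1} := by
  have hsub : univ.filter (γ · = 2) ⊆ univ.filter (γ · ≠ 0) :=
    fun i => by simp only [mem_filter, mem_univ, true_and]; omega
  have hdiff : univ.filter (γ · ≠ 0) \ univ.filter (γ · = 2) = univ.filter (γ · = 1) := by
    ext i; simp only [mem_sdiff, mem_filter, mem_univ, true_and]; omega
  rw [filter_pairProfile_eq_image_Icc, card_image_of_injective _ fun _ _ h => congrArg Prod.fst h,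
    card_Icc_finset hsub, ← hdiff, card_sdiff_of_subset hsub]

section ShiftedSubsetSums

variable {ι R : Type*} [Fintype ι] [DecidableEq ι] [CommSemiring R] (t₀ : R) (t : ι → R)

lemma shiftedSum_add_shiftedSum (S S' : Finset ι) :
    (t₀ + ∑ i ∈ S, t i) + (t₀ + ∑ i ∈ S', t i) =
      2 * t₀ + ∑ i, ((pairProfile S S' i : ℕ) : R) * t i := by
  simp only [val_pairProfile, Nat.cast_add, Nat.cast_ite, Nat.cast_one, Nat.cast_zero, add_mul,
    ite_mul, one_mul, zero_mul, sum_add_distrib, sum_ite_mem, univ_inter]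
  ring

variable {t₀ t}
variable (hB : Function.Injective fun γ : ι → Fin 3 => 2 * t₀ + ∑ i, ((γ i : ℕ) : R) * t i)
include hB

lemma shiftedSum_add_shiftedSum_eq_iff (S S' : Finset ι) (γ : ι → Fin 3) :
    (t₀ + ∑ i ∈ S, t i) + (t₀ + ∑ i ∈ S', t i) = 2 * t₀ + ∑ i, ((γ i : ℕ) : R) * t i ↔
      pairProfile S S' = γ := by
  rw [shiftedSum_add_shiftedSum]
  exact hB.eq_iff

lemma shiftedSum_injective : Function.Injective fun S : Finset ι => t₀ + ∑ i ∈ S, t i := by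
  intro S S' (h : t₀ + ∑ i ∈ S, t i = t₀ + ∑ i ∈ S', t i)
  have hprofile : pairProfile S S = pairProfile S' S' :=
    (shiftedSum_add_shiftedSum_eq_iff hB S S _).1 (by rw [h, shiftedSum_add_shiftedSum])
  ext i
  have := congrArg (fun γ => (γ i : ℕ)) hprofile
  simp only [val_pairProfile] at this
  grind

end ShiftedSubsetSums

theorem stmt1_general (p m : ℕ) (t₀ : ZMod p) (t : Fin m → ZMod p)
    (hB : Function.Injective
      (fun γ : Fin m → Fin 3 => 2 * t₀ + ∑ i, ((γ i : ℕ) : ZMod p) * t i))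
    (A : Finset (ZMod p))
    (hA : A = (Finset.univ : Finset (Finset (Fin m))).image (fun S => t₀ + ∑ i ∈ S, t i))
    (γ : Fin m → Fin 3) (n : ZMod p)
    (hn : n = 2 * t₀ + ∑ i, ((γ i : ℕ) : ZMod p) * t i) :
    ((A ×ˢ A).filter (fun ab => ab.1 + ab.2 = n)).card
      = 2 ^ ((Finset.univ.filter (fun i => γ i = 1)).card) := by
  subst hA hn
  rw [card_filter_image_prod_image (shiftedSum_injective hB)]
  simp only [shiftedSum_add_shiftedSum_eq_iff hB]
  exact card_filter_pairProfile_eq_image_Icc γ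

/-- With `A = {t₀ + Σ_{t∈S} t : S ⊆ T}` and `B` a proper GAP, if
`n = 2t₀ + Σ γᵢ tᵢ` with `γᵢ ∈ {0,1,2}` then the number of pairs `(a,b) ∈ A × A`
with `a + b = n` equals `2^{|{i : γᵢ = 1}|}`. -/
theorem stmt1 (p m : ℕ) [Fact p.Prime] (t₀ : ZMod p) (t : Fin m → ZMod p)
    (hB : Function.Injective
      (fun γ : Fin m → Fin 3 => 2 * t₀ + ∑ i, ((γ i : ℕ) : ZMod p) * t i))
    (A : Finset (ZMod p))
    (hA : A = (Finset.univ : Finset (Finset (Fin m))).image (fun S => t₀ + ∑ i ∈ S, t i))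
    (γ : Fin m → Fin 3) (n : ZMod p)
    (hn : n = 2 * t₀ + ∑ i, ((γ i : ℕ) : ZMod p) * t i) :
    ((A ×ˢ A).filter (fun ab => ab.1 + ab.2 = n)).card
      = 2 ^ ((Finset.univ.filter (fun i => γ i = 1)).card) :=
  stmt1_general p m t₀ t hB A hA γ n hn
end PairProfile
end

section
/- Under the same properness assumption on B, the additive energy E(A,A) = Σ_{n ∈ ℤ_p} R_n(A)² equals Σ_{j=0}^{m} C(m,j)·2^{m+j} = 2^m · 3^m, and in particular E(A,A) ≤ 2^{3m}. -/
open Finset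
open scoped symmDiff Combinatorics.Additive

/-!
Write the elements of `A` as `f S = t₀ + ∑ i ∈ S, t i`. Since `f S + f T = 2 t₀ + ∑ γᵢ tᵢ`
with `γ = 1_S + 1_T ∈ {0,1,2}^m`, properness of `B` says that `f S + f T` determines `γ`, that
is, the pair `(S ∩ T, S ∪ T)`. Hence `E(A,A)` counts quadruples `(S, T, S', T')` with
`S ∩ T = S' ∩ T'` and `S ∪ T = S' ∪ T'`. Given `(S, T)`, such a pair `(S', T')` is determined
by `S'`, which ranges over the interval `[S ∩ T, S ∪ T]` of size `2 ^ |S ∆ T|`; as `T` varies,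
`S ∆ T` runs over all subsets, so `E(A,A) = 2^m ∑_U 2^|U| = ∑_j C(m,j) 2^(m+j) = 2^m 3^m`.
-/

lemma Finset.addEnergy_image_of_injective {α G : Type*} [DecidableEq G] [Add G] {f : α → G}
    (hf : Function.Injective f) (s t : Finset α) :
    E[s.image f, t.image f] =
      #{x ∈ (s ×ˢ t) ×ˢ s ×ˢ t | f x.1.1 + f x.1.2 = f x.2.1 + f x.2.2} := by
  let g := Prod.map (Prod.map f f) (Prod.map f f)
  have hg : Function.Injective g := (hf.prodMap hf).prodMap (hf.prodMap hf)
  rw [addEnergy_eq_card_filter, ← prodMap_image_product, ← prodMap_image_product,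
    filter_image, card_image_of_injective _ hg]
  rfl

section PairsOfSubsets

variable {α : Type*} [Fintype α] [DecidableEq α]

lemma Finset.card_pairs_inter_eq_union_eq {I U : Finset α} (hIU : I ⊆ U) :
    #{q : Finset α × Finset α | q.1 ∩ q.2 = I ∧ q.1 ∪ q.2 = U} = 2 ^ #(U \ I) := by
  rw [card_sdiff_of_subset hIU, ← card_Icc_finset hIU]
  refine card_bij' (fun q _ => q.1) (fun S _ => (S, I ∪ (U \ S))) ?_ ?_ ?_ (fun _ _ => rfl)
  · rintro ⟨S, T⟩ h
    obtain ⟨rfl, rfl⟩ := (mem_filter.1 h).2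
    simp only [mem_Icc]
    exact ⟨inter_subset_left, subset_union_left⟩
  · intro S hS
    simp only [mem_Icc] at hS
    simp only [mem_filter, mem_univ, true_and]
    constructor <;> ext i <;> grind
  · rintro ⟨S, T⟩ h
    obtain ⟨rfl, rfl⟩ := (mem_filter.1 h).2
    ext i <;> grind

lemma Finset.sum_symmDiff_left {M : Type*} [AddCommMonoid M] (S : Finset α) (g : Finset α → M) :
    ∑ T, g (S ∆ T) = ∑ U, g U :=
  Fintype.sum_equiv (Function.Involutive.toPerm _ (symmDiff_symmDiff_cancel_left S)) _ _
    fun _ => rfl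

lemma Finset.card_quadruples_inter_eq_union_eq :
    #{x ∈ ((univ : Finset (Finset α)) ×ˢ univ) ×ˢ univ ×ˢ univ |
        x.1.1 ∩ x.1.2 = x.2.1 ∩ x.2.2 ∧ x.1.1 ∪ x.1.2 = x.2.1 ∪ x.2.2}
      = 2 ^ Fintype.card α * ∑ U : Finset α, 2 ^ #U := by
  have hfiber (S T : Finset α) :
      #{q : Finset α × Finset α | S ∩ T = q.1 ∩ q.2 ∧ S ∪ T = q.1 ∪ q.2} = 2 ^ #(S ∆ T) := by
    simp_rw [eq_comm (a := S ∩ T), eq_comm (a := S ∪ T)]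
    rw [card_pairs_inter_eq_union_eq inter_subset_union, symmDiff_eq_sup_sdiff_inf]
    rfl
  rw [card_filter, sum_product]
  simp only [univ_product_univ, sum_boole, Nat.cast_id, Fintype.sum_prod_type, hfiber,
    sum_symmDiff_left _ fun U => 2 ^ #U, sum_const, card_univ, Fintype.card_finset, smul_eq_mul]

end PairsOfSubsets

/-- The coefficient vector `γ` of `(t₀ + ∑ i ∈ S, t i) + (t₀ + ∑ i ∈ T, t i)` in `B`. -/
def pairMultiplicity {ι : Type*} [DecidableEq ι] (S T : Finset ι) (i : ι) : Fin 3 :=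
  ⟨(if i ∈ S then 1 else 0) + (if i ∈ T then 1 else 0), by split_ifs <;> omega⟩

lemma pairMultiplicity_eq_iff {ι : Type*} [DecidableEq ι] {S T S' T' : Finset ι} :
    pairMultiplicity S T = pairMultiplicity S' T' ↔ S ∩ T = S' ∩ T' ∧ S ∪ T = S' ∪ T' := by
  simp only [funext_iff, Fin.ext_iff, pairMultiplicity, Finset.ext_iff, mem_inter, mem_union,
    ← forall_and]
  refine forall_congr' fun i => ?_
  split_ifs <;> simp_all

lemma add_eq_two_mul_add_sum_pairMultiplicity {R ι : Type*} [Semiring R] [Fintype ι]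
    [DecidableEq ι] (t₀ : R) (t : ι → R) (S T : Finset ι) :
    (t₀ + ∑ i ∈ S, t i) + (t₀ + ∑ i ∈ T, t i)
      = 2 * t₀ + ∑ i, ((pairMultiplicity S T i : ℕ) : R) * t i := by
  simp only [pairMultiplicity, Nat.cast_add, Nat.cast_ite, Nat.cast_one, Nat.cast_zero, add_mul,
    ite_mul, one_mul, zero_mul, sum_add_distrib, sum_ite_mem, univ_inter]
  rw [two_mul]
  abel

lemma add_eq_add_iff_of_injective {R ι : Type*} [Semiring R] [Fintype ι] [DecidableEq ι]
    {t₀ : R} {t : ι → R}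
    (hB : Function.Injective fun γ : ι → Fin 3 => 2 * t₀ + ∑ i, ((γ i : ℕ) : R) * t i)
    (S T S' T' : Finset ι) :
    (t₀ + ∑ i ∈ S, t i) + (t₀ + ∑ i ∈ T, t i) = (t₀ + ∑ i ∈ S', t i) + (t₀ + ∑ i ∈ T', t i) ↔
      S ∩ T = S' ∩ T' ∧ S ∪ T = S' ∪ T' := by
  rw [add_eq_two_mul_add_sum_pairMultiplicity, add_eq_two_mul_add_sum_pairMultiplicity,
    hB.eq_iff, pairMultiplicity_eq_iff]

/-- Under the properness assumption on `B`, the additive energy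
`E(A,A) = Σ_{n ∈ ℤ_p} R_n(A)²` equals `Σ_{j=0}^m C(m,j)·2^{m+j} = 2^m·3^m`, and in
particular `E(A,A) ≤ 2^{3m}`. -/
theorem stmt2 (p m : ℕ) [Fact p.Prime] (t₀ : ZMod p) (t : Fin m → ZMod p)
    (hB : Function.Injective
      (fun γ : Fin m → Fin 3 => 2 * t₀ + ∑ i, ((γ i : ℕ) : ZMod p) * t i))
    (A : Finset (ZMod p))
    (hA : A = (Finset.univ : Finset (Finset (Fin m))).image (fun S => t₀ + ∑ i ∈ S, t i))
    (R : ZMod p → ℕ)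
    (hR : ∀ n, R n = ((A ×ˢ A).filter (fun ab => ab.1 + ab.2 = n)).card) :
    (∑ n : ZMod p, (R n) ^ 2 = ∑ j ∈ Finset.range (m + 1), Nat.choose m j * 2 ^ (m + j))
    ∧ (∑ n : ZMod p, (R n) ^ 2 = 2 ^ m * 3 ^ m)
    ∧ (∑ n : ZMod p, (R n) ^ 2 ≤ 2 ^ (3 * m)) := by
  set f : Finset (Fin m) → ZMod p := fun S => t₀ + ∑ i ∈ S, t i
  have hf : Function.Injective f := fun S S' h => by
    simpa using (add_eq_add_iff_of_injective hB S ∅ S' ∅).1 (congrArg (· + f ∅) h)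
  have hE : ∑ n, R n ^ 2 = 2 ^ m * ∑ j ∈ range (m + 1), m.choose j * 2 ^ j :=
    calc ∑ n, R n ^ 2 = E[A, A] := by simp_rw [hR, addEnergy_eq_sum_sq]
    _ = #{x ∈ (univ ×ˢ univ) ×ˢ univ ×ˢ univ | f x.1.1 + f x.1.2 = f x.2.1 + f x.2.2} := by
      rw [hA, addEnergy_image_of_injective hf]
    _ = #{x ∈ ((univ : Finset (Finset (Fin m))) ×ˢ univ) ×ˢ univ ×ˢ univ |
          x.1.1 ∩ x.1.2 = x.2.1 ∩ x.2.2 ∧ x.1.1 ∪ x.1.2 = x.2.1 ∪ x.2.2} := by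
      simp_rw [f, add_eq_add_iff_of_injective hB]
    _ = 2 ^ m * ∑ j ∈ range (m + 1), m.choose j * 2 ^ j := by
      rw [card_quadruples_inter_eq_union_eq, Fintype.card_fin, ← powerset_univ,
        sum_powerset_apply_card, card_univ, Fintype.card_fin]
      simp only [smul_eq_mul]
  have hbinom : ∑ j ∈ range (m + 1), m.choose j * 2 ^ j = 3 ^ m := by
    rw [show 3 = 2 + 1 from rfl, add_pow]
    exact sum_congr rfl fun j _ => by rw [one_pow, mul_one, Nat.cast_id, mul_comm]
  refine ⟨?_, ?_, ?_⟩
  · rw [hE, mul_sum]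
    exact sum_congr rfl fun j _ => by ring
  · rw [hE, hbinom]
  · rw [hE, hbinom, ← mul_pow, pow_mul]
    exact Nat.pow_le_pow_left (by norm_num) m
end

section
/- Let ε > 0, m = ⌈log₂ p − 2 log₂ ε⌉, d = 2^m, and suppose t₀, t₁,...,t_m ∈ ℤ_p are such that B = {2t₀ + Σ n_i t_i : 0 ≤ n_i < 3} is a proper GAP. Then the set A = {t₀ + Σ_{t∈S} t : S ⊆ T}, T = {t₁,...,t_m}, satisfies max_{x≠0} (1/d²)|Σ_{a∈A} e^{2πi a x/p}|² ≤ ε. -/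
/-!
For `S(x) = ∑_{a ∈ A} e(ax/p)`, orthogonality of the additive characters of `ℤ_p` gives
`∑_x |S(x)|⁴ = p · E(A)`, and the additive energy satisfies `E(A) ≤ |A|³ ≤ d³`. Hence
`|S(x)|⁴ ≤ p d³ ≤ ε² d⁴`, because `m` is chosen so that `p ≤ ε² d`.
-/

open Finset
open scoped Combinatorics.Additive

namespace Finset

lemma addEnergy_le_card_sq_mul_card {α : Type*} [DecidableEq α] [Add α] [IsLeftCancelAdd α]
    (s t : Finset α) : E[s, t] ≤ #s ^ 2 * #t := by
  calc E[s, t] ≤ #((s ×ˢ s) ×ˢ t) := by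
        refine card_le_card_of_injOn (fun x => (x.1, x.2.1)) ?_ ?_
        · intro x hx
          simp only [coe_filter, mem_product, Set.mem_ofPred_eq] at hx
          simp [hx.1.1, hx.1.2.1]
        · rintro ⟨⟨a₁, a₂⟩, b₁, b₂⟩ hx ⟨⟨a₁', a₂'⟩, b₁', b₂'⟩ hx' h
          simp only [coe_filter, mem_product, Set.mem_ofPred_eq] at hx hx'
          simp only [Prod.mk.injEq] at h
          obtain ⟨⟨rfl, rfl⟩, rfl⟩ := h
          have : b₂ = b₂' := add_left_cancel (hx.2.symm.trans hx'.2)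
          rw [this]
    _ = #s ^ 2 * #t := by rw [card_product, card_product, sq]

end Finset

namespace AddChar

variable {R : Type*} [CommRing R] [Fintype R] [DecidableEq R] {ψ : AddChar R ℂ}

lemma sum_norm_sq_sum_mul (hψ : ψ.IsPrimitive) {ι : Type*} (B : Finset ι) (f : ι → R) :
    ∑ x, ‖∑ i ∈ B, ψ (f i * x)‖ ^ 2 = Fintype.card R * #{q ∈ B ×ˢ B | f q.1 = f q.2} := by
  have expand : ∀ x, (‖∑ i ∈ B, ψ (f i * x)‖ : ℂ) ^ 2
      = ∑ q ∈ B ×ˢ B, ψ (x * (f q.1 - f q.2)) := by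
    intro x
    rw [← Complex.mul_conj', map_sum, sum_mul_sum, sum_product]
    refine sum_congr rfl fun i _ => sum_congr rfl fun j _ => ?_
    rw [← map_neg_eq_conj, ← map_add_eq_mul]
    congr 1
    ring
  apply Complex.ofReal_injective
  push_cast
  simp_rw [expand]
  rw [sum_comm]
  simp_rw [sum_mulShift _ hψ, sub_eq_zero]
  rw [← Nat.cast_sum, sum_ite, sum_const_zero, add_zero, sum_const, smul_eq_mul, Nat.cast_mul,
    mul_comm]

lemma sum_norm_pow_four_sum_mul (hψ : ψ.IsPrimitive) (A : Finset R) :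
    ∑ x, ‖∑ a ∈ A, ψ (a * x)‖ ^ 4 = Fintype.card R * E[A] := by
  have square : ∀ x, (∑ a ∈ A, ψ (a * x)) ^ 2 = ∑ q ∈ A ×ˢ A, ψ ((q.1 + q.2) * x) := by
    intro x
    rw [sq, sum_mul_sum, sum_product]
    simp_rw [← map_add_eq_mul, add_mul]
  calc ∑ x, ‖∑ a ∈ A, ψ (a * x)‖ ^ 4 = ∑ x, ‖∑ q ∈ A ×ˢ A, ψ ((q.1 + q.2) * x)‖ ^ 2 := by
        simp_rw [← square, norm_pow, ← pow_mul]
    _ = Fintype.card R * E[A] := by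
        rw [sum_norm_sq_sum_mul hψ, addEnergy_eq_card_filter]

lemma norm_pow_four_sum_mul_le (hψ : ψ.IsPrimitive) (A : Finset R) (x : R) :
    ‖∑ a ∈ A, ψ (a * x)‖ ^ 4 ≤ Fintype.card R * #A ^ 3 :=
  calc ‖∑ a ∈ A, ψ (a * x)‖ ^ 4 ≤ ∑ y, ‖∑ a ∈ A, ψ (a * y)‖ ^ 4 :=
        single_le_sum (f := fun y => ‖∑ a ∈ A, ψ (a * y)‖ ^ 4) (fun _ _ => by positivity)
          (mem_univ x)
    _ = Fintype.card R * E[A] := sum_norm_pow_four_sum_mul hψ A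
    _ ≤ Fintype.card R * #A ^ 3 := by
        gcongr
        exact_mod_cast (addEnergy_le_card_sq_mul_card A A).trans_eq (by ring)

end AddChar

lemma Real.le_pow_natCeil_logb {b x : ℝ} (hb : 1 < b) (hx : 0 < x) :
    x ≤ b ^ ⌈Real.logb b x⌉₊ := by
  rw [← Real.rpow_natCast, ← Real.logb_le_iff_le_rpow hb hx]
  exact Nat.le_ceil _

theorem stmt8_general (p : ℕ) [Fact p.Prime] (ε : ℝ) (hε : 0 < ε) (m : ℕ)
    (hm : m = ⌈Real.logb 2 p - 2 * Real.logb 2 ε⌉₊) (d : ℕ) (hd : d = 2 ^ m)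
    (t₀ : ZMod p) (t : Fin m → ZMod p)
    (A : Finset (ZMod p))
    (hA : A = (Finset.univ : Finset (Finset (Fin m))).image (fun S => t₀ + ∑ i ∈ S, t i)) :
    ∀ x : ZMod p, x ≠ 0 →
      (1 / (d : ℝ) ^ 2) *
        ‖∑ a ∈ A, Complex.exp (2 * Real.pi * Complex.I * ((a * x).val : ℕ) / p)‖ ^ 2
      ≤ ε := by
  intro x _
  have hp : (0 : ℝ) < p := Nat.cast_pos.mpr (Fact.out : p.Prime).pos
  have hA_card : #A ≤ d := by
    rw [hA, hd]
    exact card_image_le.trans_eq (by simp)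
  have hpd : (p : ℝ) ≤ ε ^ 2 * d := by
    have h := Real.le_pow_natCeil_logb one_lt_two (div_pos hp (pow_pos hε 2))
    rw [Real.logb_div hp.ne' (pow_pos hε 2).ne', Real.logb_pow, Nat.cast_ofNat, ← hm,
      div_le_iff₀ (pow_pos hε 2)] at h
    rw [hd]
    push_cast
    linarith
  set S := ∑ a ∈ A, Complex.exp (2 * Real.pi * Complex.I * ((a * x).val : ℕ) / p)
  have hS : S = ∑ a ∈ A, ZMod.stdAddChar (a * x) := by
    simp only [S, ZMod.stdAddChar_apply, ZMod.toCircle_apply]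
  have hS4 : ‖S‖ ^ 4 ≤ (ε * d ^ 2) ^ 2 :=
    calc ‖S‖ ^ 4 ≤ p * #A ^ 3 := by
          have h := AddChar.norm_pow_four_sum_mul_le (ZMod.isPrimitive_stdAddChar p) A x
          rwa [ZMod.card, ← hS] at h
      _ ≤ ε ^ 2 * d * d ^ 3 := by gcongr
      _ = (ε * d ^ 2) ^ 2 := by ring
  have hS2 : ‖S‖ ^ 2 ≤ ε * d ^ 2 :=
    (pow_le_pow_iff_left₀ (by positivity) (by positivity) two_ne_zero).mp
      (by rw [← pow_mul]; exact hS4)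
  have hd_pos : (0 : ℝ) < d ^ 2 := by rw [hd]; positivity
  rw [one_div_mul_eq_div, div_le_iff₀ hd_pos]
  exact hS2

/-- Let `ε > 0`, `m = ⌈log₂ p − 2 log₂ ε⌉`, `d = 2^m`, and suppose
`t₀, t₁, …, t_m ∈ ℤ_p` are such that `B = {2t₀ + Σ nᵢtᵢ : 0 ≤ nᵢ < 3}` is a proper GAP.
Then `A = {t₀ + Σ_{t∈S} t : S ⊆ T}` satisfies
`max_{x ≠ 0} (1/d²)|Σ_{a∈A} e^{2πi a x/p}|² ≤ ε`. -/
theorem stmt8 (p : ℕ) [Fact p.Prime] (ε : ℝ) (hε : 0 < ε) (m : ℕ)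
    (hm : m = ⌈Real.logb 2 p - 2 * Real.logb 2 ε⌉₊) (d : ℕ) (hd : d = 2 ^ m)
    (t₀ : ZMod p) (t : Fin m → ZMod p)
    (hB : Function.Injective
      (fun γ : Fin m → Fin 3 => 2 * t₀ + ∑ i, ((γ i : ℕ) : ZMod p) * t i))
    (A : Finset (ZMod p))
    (hA : A = (Finset.univ : Finset (Finset (Fin m))).image (fun S => t₀ + ∑ i ∈ S, t i)) :
    ∀ x : ZMod p, x ≠ 0 →
      (1 / (d : ℝ) ^ 2) *
        ‖∑ a ∈ A, Complex.exp (2 * Real.pi * Complex.I * ((a * x).val : ℕ) / p)‖ ^ 2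
      ≤ ε :=
  stmt8_general p ε hε m hm d hd t₀ t A hA
end

section
/- Let m ≥ 1 and let A be the set of subset sums of T = {t₁,...,t_m} (shifted by t₀) in ℤ_p with the properness assumption on B. Then for every n ∈ ℤ_p, R_n(A) ∈ {0} ∪ {2^j : 0 ≤ j ≤ m}, i.e., the number of representations of any n as a+b with a,b ∈ A is either 0 or a power of 2 at most 2^m. -/
/-!
Write `a = t₀ + ∑_{i ∈ S} tᵢ` and `b = t₀ + ∑_{i ∈ S'} tᵢ`. Then `a + b` is the element of `B` with
coefficients `γᵢ = [i ∈ S] + [i ∈ S']`, so by properness `a + b = n` pins down `γ`; taking `S = S'`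
also shows that `S ↦ a` is injective. Hence `R_n(A)` counts the pairs `(S, S')` with a prescribed
`γ`: coordinates with `γᵢ ∈ {0, 2}` are forced and each coordinate with `γᵢ = 1` allows two
choices, giving `2 ^ #{i | γᵢ = 1}`.
-/

open Finset

lemma card_filter_image_product {α β γ δ : Type*} [DecidableEq β] [DecidableEq δ]
    {f : α → β} {g : γ → δ} (hf : Function.Injective f) (hg : Function.Injective g)
    (s : Finset α) (t : Finset γ) (p : β × δ → Prop) [DecidablePred p] :
    #{x ∈ s.image f ×ˢ t.image g | p x} = #{x ∈ s ×ˢ t | p (Prod.map f g x)} := by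
  rw [← prodMap_image_product, filter_image, card_image_of_injective _ (hf.prodMap hg)]

section PairCount

variable {ι : Type*} [DecidableEq ι]

def boolPairCount (b : Bool × Bool) : Fin 3 := cond b.1 1 0 + cond b.2 1 0

lemma card_filter_boolPairCount_eq (k : Fin 3) :
    #{b | boolPairCount b = k} = if k = 1 then 2 else 1 := by
  fin_cases k <;> decide

def pairCount (S S' : Finset ι) (i : ι) : Fin 3 :=
  boolPairCount (decide (i ∈ S), decide (i ∈ S'))

lemma card_filter_pairCount_eq [Fintype ι] (c : ι → Fin 3) :
    #{SS : Finset ι × Finset ι | pairCount SS.1 SS.2 = c} = 2 ^ #{i | c i = 1} := by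
  calc #{SS : Finset ι × Finset ι | pairCount SS.1 SS.2 = c}
      = #(Fintype.piFinset fun i => ({b | boolPairCount b = c i} : Finset (Bool × Bool))) := by
        -- a pair of subsets is a map `ι → Bool × Bool`, and the condition is coordinatewise
        refine card_nbij' (fun SS i => (decide (i ∈ SS.1), decide (i ∈ SS.2)))
          (fun f => (({i | (f i).1} : Finset ι), ({i | (f i).2} : Finset ι))) ?_ ?_ ?_ ?_
        · intro SS hSS
          simp_all [pairCount, funext_iff]
        · intro f hf
          simp_all [pairCount, funext_iff]
        · intro SS _
          ext <;> simp
        · intro f _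
          ext <;> simp
    _ = ∏ i, if c i = 1 then 2 else 1 := by simp [card_filter_boolPairCount_eq]
    _ = 2 ^ #{i | c i = 1} := by simp [prod_ite]

lemma pairCount_self_injective : Function.Injective fun S : Finset ι => pairCount S S := by
  intro S S' h
  ext i
  have hi := congrFun h i
  by_cases hS : i ∈ S <;> by_cases hS' : i ∈ S' <;> simp_all [pairCount, boolPairCount]

end PairCount

section SubsetSums

variable {ι R : Type*} [Fintype ι] [DecidableEq ι] [CommSemiring R] (t₀ : R) (t : ι → R)

/-- `A` is the image of `shiftedSubsetSum t₀ t`, `B` that of `weightedSum t₀ t`. -/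
def shiftedSubsetSum (S : Finset ι) : R := t₀ + ∑ i ∈ S, t i

def weightedSum (γ : ι → Fin 3) : R := 2 * t₀ + ∑ i, ((γ i : ℕ) : R) * t i

lemma shiftedSubsetSum_add_shiftedSubsetSum (S S' : Finset ι) :
    shiftedSubsetSum t₀ t S + shiftedSubsetSum t₀ t S' = weightedSum t₀ t (pairCount S S') := by
  have hterm (i : ι) : ((pairCount S S' i : ℕ) : R) * t i
      = (if i ∈ S then t i else 0) + if i ∈ S' then t i else 0 := by
    by_cases hS : i ∈ S <;> by_cases hS' : i ∈ S' <;>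
      simp [hS, hS', pairCount, boolPairCount, two_mul]
  simp only [shiftedSubsetSum, weightedSum, hterm, sum_add_distrib, sum_ite_mem, univ_inter]
  ring

variable {t₀ t}

lemma shiftedSubsetSum_injective (h : Function.Injective (weightedSum t₀ t)) :
    Function.Injective (shiftedSubsetSum t₀ t) := fun S S' hSS' =>
  pairCount_self_injective <| h <| by
    simp only [← shiftedSubsetSum_add_shiftedSubsetSum, hSS']

lemma filter_add_eq_weightedSum [DecidableEq R] (h : Function.Injective (weightedSum t₀ t))
    (c : ι → Fin 3) :
    univ.filter (fun SS : Finset ι × Finset ι =>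
      shiftedSubsetSum t₀ t SS.1 + shiftedSubsetSum t₀ t SS.2 = weightedSum t₀ t c)
      = univ.filter fun SS => pairCount SS.1 SS.2 = c :=
  filter_congr fun SS _ => by rw [shiftedSubsetSum_add_shiftedSubsetSum, h.eq_iff]

lemma card_filter_add_eq_zero_or_two_pow [DecidableEq R]
    (h : Function.Injective (weightedSum t₀ t)) (n : R) :
    #{SS : Finset ι × Finset ι | shiftedSubsetSum t₀ t SS.1 + shiftedSubsetSum t₀ t SS.2 = n} = 0
      ∨ ∃ j ≤ Fintype.card ι, #{SS : Finset ι × Finset ι |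
        shiftedSubsetSum t₀ t SS.1 + shiftedSubsetSum t₀ t SS.2 = n} = 2 ^ j := by
  rcases eq_empty_or_nonempty {SS : Finset ι × Finset ι |
      shiftedSubsetSum t₀ t SS.1 + shiftedSubsetSum t₀ t SS.2 = n} with hempty | ⟨⟨S₀, S₁⟩, hmem⟩
  · exact .inl (card_eq_zero.2 hempty)
  · obtain rfl : n = weightedSum t₀ t (pairCount S₀ S₁) := by
      rw [← shiftedSubsetSum_add_shiftedSubsetSum, (mem_filter.mp hmem).2]
    rw [filter_add_eq_weightedSum h, card_filter_pairCount_eq]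
    exact .inr ⟨_, (card_filter_le _ _).trans_eq card_univ, rfl⟩

end SubsetSums

theorem stmt16_general (p m : ℕ) (t₀ : ZMod p) (t : Fin m → ZMod p)
    (hB : Function.Injective
      (fun γ : Fin m → Fin 3 => 2 * t₀ + ∑ i, ((γ i : ℕ) : ZMod p) * t i))
    (A : Finset (ZMod p))
    (hA : A = (Finset.univ : Finset (Finset (Fin m))).image (fun S => t₀ + ∑ i ∈ S, t i)) :
    ∀ n : ZMod p,
      ((A ×ˢ A).filter (fun ab => ab.1 + ab.2 = n)).card = 0
      ∨ ∃ j ≤ m, ((A ×ˢ A).filter (fun ab => ab.1 + ab.2 = n)).card = 2 ^ j := by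
  intro n
  have hinj : Function.Injective (shiftedSubsetSum t₀ t) := shiftedSubsetSum_injective hB
  obtain rfl : A = univ.image (shiftedSubsetSum t₀ t) := hA
  rw [card_filter_image_product hinj hinj, univ_product_univ]
  simpa only [Prod.map_fst, Prod.map_snd, Fintype.card_fin] using
    card_filter_add_eq_zero_or_two_pow hB n

/-- With the properness assumption on `B`, for every `n ∈ ℤ_p` the number of
representations `R_n(A)` of `n` as `a + b` with `a, b ∈ A` is either `0` or a power of `2`
at most `2^m`. -/
theorem stmt16 (p m : ℕ) [Fact p.Prime] (hm : 1 ≤ m) (t₀ : ZMod p) (t : Fin m → ZMod p)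
    (hB : Function.Injective
      (fun γ : Fin m → Fin 3 => 2 * t₀ + ∑ i, ((γ i : ℕ) : ZMod p) * t i))
    (A : Finset (ZMod p))
    (hA : A = (Finset.univ : Finset (Finset (Fin m))).image (fun S => t₀ + ∑ i ∈ S, t i)) :
    ∀ n : ZMod p,
      ((A ×ˢ A).filter (fun ab => ab.1 + ab.2 = n)).card = 0
      ∨ ∃ j ≤ m, ((A ×ˢ A).filter (fun ab => ab.1 + ab.2 = n)).card = 2 ^ j :=
  stmt16_general p m t₀ t hB A hA
end
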